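/- arXiv:1901.04924 — 6 statements merged into one kernel-verified Lean document; each statement's English description precedes it below -/
import Mathlib

section
/- The Lax-Friedrichs wall boundary flux satisfies the entropy inequality: for all real Ma, Ma·(1 + γ·Ma·(Ma + |Ma| + 1) − 1) ≥ 0. -/
/-- The Lax-Friedrichs wall boundary flux satisfies the entropy inequality. -/
theorem lf_entropy_stable (γ : ℝ) (hγ : 0 < γ) (Ma : ℝ) :
    0 ≤ Ma * (1 + γ * Ma * (Ma + |Ma| + 1) - 1) := by
  have h_factor : 0 ≤ Ma + |Ma| + 1 := by linarith [add_abs_nonneg Ma]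
  calc 0 ≤ γ * Ma ^ 2 * (Ma + |Ma| + 1) := mul_nonneg (by positivity) h_factor
    _ = Ma * (1 + γ * Ma * (Ma + |Ma| + 1) - 1) := by ring
end

section
/- The Roe wall boundary flux pressure ratio r(Ma) = 1 + γ·Ma·(Ma + √(1 + ((γ−1)/2)·Ma²)) satisfies the entropy inequality Ma·(r(Ma) − 1) ≥ 0 if and only if Ma ≥ −√(2/(3−γ)), assuming 1 < γ < 3. -/
/-!
Since `Ma * (r(Ma) - 1) = γ Ma² (Ma + s)` with `s = √(1 + (γ-1)/2 Ma²) ≥ 0`, the inequality says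
`-s ≤ Ma`, i.e. `Ma ≥ 0` or `Ma² ≤ s²`; and `Ma² ≤ 1 + (γ-1)/2 Ma²` is `Ma² ≤ 2/(3-γ)` when `γ < 3`.
-/

theorem Real.neg_sqrt_le_iff (x c : ℝ) : -√c ≤ x ↔ 0 ≤ x ∨ x ^ 2 ≤ c := by
  rcases le_or_gt 0 x with hx | hx
  · simp only [hx, true_or, iff_true]
    linarith [Real.sqrt_nonneg c]
  · rw [neg_le, Real.le_sqrt' (neg_pos.mpr hx), neg_sq]
    simp only [not_le.mpr hx, false_or]

theorem zero_le_mul_mul_mul_add_iff {γ s x : ℝ} (hγ : 0 < γ) (hs : 0 ≤ s) :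
    0 ≤ x * (γ * x * (x + s)) ↔ 0 ≤ x + s := by
  rcases eq_or_ne x 0 with rfl | hx
  · simpa using hs
  · rw [show x * (γ * x * (x + s)) = γ * x ^ 2 * (x + s) by ring]
    exact mul_nonneg_iff_of_pos_left (by positivity)

theorem sq_le_one_add_mul_sq_iff {γ x : ℝ} (hγ3 : γ < 3) :
    x ^ 2 ≤ 1 + ((γ - 1) / 2) * x ^ 2 ↔ x ^ 2 ≤ 2 / (3 - γ) := by
  rw [le_div_iff₀ (by linarith)]
  constructor <;> intro h <;> linarith

/-- The Roe wall flux satisfies the entropy inequality iff `Ma ≥ −√(2/(3−γ))`. -/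
theorem roe_entropy_stable_iff (γ : ℝ) (hγ : 1 < γ) (hγ3 : γ < 3) (Ma : ℝ) :
    0 ≤ Ma * ((1 + γ * Ma * (Ma + Real.sqrt (1 + ((γ - 1) / 2) * Ma ^ 2))) - 1) ↔
      -Real.sqrt (2 / (3 - γ)) ≤ Ma := by
  rw [add_sub_cancel_left, zero_le_mul_mul_mul_add_iff (by linarith) (Real.sqrt_nonneg _),
    ← neg_le_iff_add_nonneg, Real.neg_sqrt_le_iff, Real.neg_sqrt_le_iff,
    sq_le_one_add_mul_sq_iff hγ3]
end

section
/- For γ = 7/5, the Roe wall boundary flux fails the entropy inequality exactly for Ma < −√(5/4); in particular there exists Ma with −2 < Ma < −1 for which Ma·(r(Ma) − 1) < 0. -/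
/-!
Writing `s = √(1 + (γ-1)/2·Ma²)`, we have `Ma·(r(Ma) - 1) = γ·Ma²·(Ma + s)`, so for `Ma ≠ 0` the
entropy condition fails exactly when `Ma + s < 0`, i.e. when `Ma < 0` and `s² < Ma²`. For `γ < 3`
the latter reads `Ma² > 2/(3-γ)`, which is `5/4` at `γ = 7/5`; the witness is `Ma = -3/2`.
-/

open Real

lemma Real.add_sqrt_neg_iff (x y : ℝ) : x + √y < 0 ↔ x < 0 ∧ y < x ^ 2 := by
  rw [← lt_neg_iff_add_neg']
  constructor
  · intro h
    have hx : x < 0 := by linarith [sqrt_nonneg y]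
    exact ⟨hx, by rwa [sqrt_lt' (by linarith), neg_sq] at h⟩
  · rintro ⟨hx, hy⟩
    rwa [sqrt_lt' (by linarith), neg_sq]

lemma Real.lt_neg_sqrt_iff (x c : ℝ) : x < -√c ↔ x < 0 ∧ c < x ^ 2 := by
  rw [← add_sqrt_neg_iff, lt_neg_iff_add_neg]

/-- The paper's `r(Ma)`, for a general ratio of specific heats `γ`. -/
noncomputable def roeRatio (γ Ma : ℝ) : ℝ :=
  1 + γ * Ma * (Ma + √(1 + (γ - 1) / 2 * Ma ^ 2))

lemma mul_roeRatio_sub_one (γ Ma : ℝ) :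
    Ma * (roeRatio γ Ma - 1) = γ * Ma ^ 2 * (Ma + √(1 + (γ - 1) / 2 * Ma ^ 2)) := by
  unfold roeRatio
  ring

lemma mul_roeRatio_sub_one_neg_iff {γ : ℝ} (hγ : 0 < γ) (Ma : ℝ) :
    Ma * (roeRatio γ Ma - 1) < 0 ↔ Ma + √(1 + (γ - 1) / 2 * Ma ^ 2) < 0 := by
  rw [mul_roeRatio_sub_one]
  constructor
  · intro h
    exact neg_of_mul_neg_right h (by positivity)
  · intro h
    have hMa : Ma ≠ 0 := by
      rintro rfl
      norm_num at h
    exact mul_neg_of_pos_of_neg (by positivity) h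

theorem mul_roeRatio_sub_one_neg_iff_lt {γ : ℝ} (hγ₀ : 0 < γ) (hγ₃ : γ < 3) (Ma : ℝ) :
    Ma * (roeRatio γ Ma - 1) < 0 ↔ Ma < -√(2 / (3 - γ)) := by
  have h3γ : 0 < 3 - γ := by linarith
  have hthreshold : 1 + (γ - 1) / 2 * Ma ^ 2 < Ma ^ 2 ↔ 2 / (3 - γ) < Ma ^ 2 := by
    rw [div_lt_iff₀ h3γ]
    constructor <;> intro h <;> linarith
  rw [mul_roeRatio_sub_one_neg_iff hγ₀, add_sqrt_neg_iff, lt_neg_sqrt_iff, hthreshold]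

/-- For `γ = 7/5` the Roe wall flux fails the entropy inequality exactly for
`Ma < −√(5/4)`; in particular it fails for some `Ma ∈ (−2, −1)`. -/
theorem roe_entropy_failure :
    (∀ Ma : ℝ,
      Ma * ((1 + (7/5 : ℝ) * Ma * (Ma + Real.sqrt (1 + (((7/5 : ℝ) - 1) / 2) * Ma ^ 2))) - 1) < 0 ↔
        Ma < -Real.sqrt (5/4)) ∧
    ∃ Ma : ℝ, -2 < Ma ∧ Ma < -1 ∧
      Ma * ((1 + (7/5 : ℝ) * Ma * (Ma + Real.sqrt (1 + (((7/5 : ℝ) - 1) / 2) * Ma ^ 2))) - 1) < 0 := by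
  have hfailure (Ma : ℝ) : Ma * (roeRatio (7/5) Ma - 1) < 0 ↔ Ma < -√(5/4) := by
    rw [mul_roeRatio_sub_one_neg_iff_lt (by norm_num) (by norm_num)]
    norm_num
  refine ⟨hfailure, -3/2, by norm_num, by norm_num, (hfailure _).2 ?_⟩
  rw [lt_neg_sqrt_iff]
  norm_num
end

section
/- For the symmetric 5×5 matrix A_n = b(e₁nᵀ + neᵀ₁) + a(e₅nᵀ + neᵀ₅) (embedded appropriately, with n a unit vector in the velocity slots), the quadratic form of its matrix absolute value satisfies Uᵀ|A_n|U = (1/c̄)·Q² + c̄·V_n², where c̄ = √(a² + b²), Q = b·ρ' + a·P', and V_n = V·n. -/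
/-!
Write `A_n = u wᵀ + w uᵀ` with `u = b e₁ + a e₅` and `w = (0, n, 0)`, so that `u ⬝ᵥ w = 0` and
`w ⬝ᵥ w = 1`. Then `A_n² = u uᵀ + ‖u‖² w wᵀ` and `A_n³ = ‖u‖² A_n`, where `‖u‖ = c̄`. Hence
`A_n² / c̄` is a positive semidefinite square root of `A_n²`, and by uniqueness of such roots it is
`|A_n|`. Its quadratic form is `((u ⬝ᵥ U)² + c̄² (w ⬝ᵥ U)²) / c̄ = Q² / c̄ + c̄ V_n²`.
-/

open Matrix

namespace Matrix

section RankTwo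

variable {ι R : Type*} [CommRing R]

theorem isSymm_vecMulVec_add_vecMulVec (u w : ι → R) :
    (vecMulVec u w + vecMulVec w u).IsSymm := by
  simp [IsSymm, add_comm]

variable [Fintype ι] {u w : ι → R}

theorem vecMulVec_add_vecMulVec_mul_self (huw : u ⬝ᵥ w = 0) (hw : w ⬝ᵥ w = 1) :
    (vecMulVec u w + vecMulVec w u) * (vecMulVec u w + vecMulVec w u) =
      vecMulVec u u + (u ⬝ᵥ u) • vecMulVec w w := by
  simp only [add_mul, mul_add, vecMulVec_mul_vecMulVec, dotProduct_comm w u, huw, hw, zero_smul,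
    one_smul, vecMulVec_zero, vecMulVec_smul]
  abel

theorem vecMulVec_add_vecMulVec_mul_self_mul (huw : u ⬝ᵥ w = 0) (hw : w ⬝ᵥ w = 1) :
    (vecMulVec u w + vecMulVec w u) * (vecMulVec u w + vecMulVec w u) *
      (vecMulVec u w + vecMulVec w u) = (u ⬝ᵥ u) • (vecMulVec u w + vecMulVec w u) := by
  simp only [vecMulVec_add_vecMulVec_mul_self huw hw, add_mul, mul_add, smul_mul_assoc,
    vecMulVec_mul_vecMulVec, dotProduct_comm w u, huw, hw, zero_smul, one_smul, vecMulVec_zero,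
    vecMulVec_smul, smul_zero, add_zero, zero_add, smul_add]

theorem dotProduct_vecMulVec_self_mulVec (u x : ι → R) :
    x ⬝ᵥ (vecMulVec u u *ᵥ x) = (u ⬝ᵥ x) ^ 2 := by
  simp [vecMulVec_mulVec, dotProduct_comm x u, sq]

theorem dotProduct_vecMulVec_add_vecMulVec_mul_self_mulVec (huw : u ⬝ᵥ w = 0)
    (hw : w ⬝ᵥ w = 1) (x : ι → R) :
    x ⬝ᵥ ((vecMulVec u w + vecMulVec w u) * (vecMulVec u w + vecMulVec w u)) *ᵥ x =
      (u ⬝ᵥ x) ^ 2 + (u ⬝ᵥ u) * (w ⬝ᵥ x) ^ 2 := by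
  rw [vecMulVec_add_vecMulVec_mul_self huw hw, add_mulVec, smul_mulVec, dotProduct_add,
    dotProduct_smul, dotProduct_vecMulVec_self_mulVec, dotProduct_vecMulVec_self_mulVec,
    smul_eq_mul]

end RankTwo

section PosSemidefSqrt

open scoped MatrixOrder ComplexOrder

variable {ι 𝕜 : Type*} [Fintype ι] [RCLike 𝕜]

theorem IsHermitian.mul_self_eq_zero_of_mul_self_mul_eq_zero {A : Matrix ι ι 𝕜}
    (hA : A.IsHermitian) (h : A * A * A = 0) : A * A = 0 := by
  rw [← conjTranspose_mul_self_eq_zero, conjTranspose_mul, hA.eq, ← Matrix.mul_assoc, h,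
    Matrix.zero_mul]

variable [DecidableEq ι]

theorem PosSemidef.eq_of_mul_self_eq {B C : Matrix ι ι 𝕜} (hB : B.PosSemidef)
    (hC : C.PosSemidef) (h : B * B = C * C) : B = C :=
  (CFC.mul_self_eq_mul_self_iff B C hB.nonneg hC.nonneg).mp h

theorem PosSemidef.eq_inv_sqrt_smul_mul_self {A B : Matrix ι ι 𝕜} (hA : A.IsHermitian) {s : ℝ}
    (hs : 0 ≤ s) (hA3 : A * A * A = s • A) (hB : B.PosSemidef) (hBA : B * B = A * A) :
    B = (√s)⁻¹ • (A * A) := by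
  have hA2 : (A * A).PosSemidef := by
    simpa only [hA.eq] using posSemidef_conjTranspose_mul_self A
  refine hB.eq_of_mul_self_eq (hA2.smul (by positivity)) ?_
  rw [hBA, smul_mul_smul_comm, ← Matrix.mul_assoc, hA3, smul_mul_assoc, smul_smul]
  rcases hs.eq_or_lt with rfl | hs
  · simp [hA.mul_self_eq_zero_of_mul_self_mul_eq_zero (by simpa using hA3)]
  · rw [← mul_inv, Real.mul_self_sqrt hs.le, inv_mul_cancel₀ hs.ne', one_smul]

end PosSemidefSqrt

end Matrix

theorem abs_An_quadratic_form_general (a b : ℝ)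
    (n : Fin 3 → ℝ) (hn : n 0 ^ 2 + n 1 ^ 2 + n 2 ^ 2 = 1)
    (ρ' P' : ℝ) (V : Fin 3 → ℝ)
    (Vn : ℝ) (hVn : Vn = V 0 * n 0 + V 1 * n 1 + V 2 * n 2)
    (cbar : ℝ) (hcbar : cbar = Real.sqrt (a ^ 2 + b ^ 2))
    (Q : ℝ) (hQ : Q = b * ρ' + a * P')
    (An : Matrix (Fin 5) (Fin 5) ℝ)
    (hAn : An = !![0, n 0 * b, n 1 * b, n 2 * b, 0;
                   n 0 * b, 0, 0, 0, n 0 * a;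
                   n 1 * b, 0, 0, 0, n 1 * a;
                   n 2 * b, 0, 0, 0, n 2 * a;
                   0, n 0 * a, n 1 * a, n 2 * a, 0])
    (absAn : Matrix (Fin 5) (Fin 5) ℝ)
    (habs : absAn.PosSemidef ∧ absAn * absAn = An * An)
    (U : Fin 5 → ℝ) (hU : U = ![ρ', V 0, V 1, V 2, P']) :
    U ⬝ᵥ (absAn *ᵥ U) = (1 / cbar) * Q ^ 2 + cbar * Vn ^ 2 := by
  set u : Fin 5 → ℝ := ![b, 0, 0, 0, a]
  set w : Fin 5 → ℝ := ![0, n 0, n 1, n 2, 0]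
  have hAuw : An = vecMulVec u w + vecMulVec w u := by
    subst hAn
    ext i j
    fin_cases i <;> fin_cases j <;> simp [u, w, mul_comm]
  have huw : u ⬝ᵥ w = 0 := by simp [u, w, dotProduct, Fin.sum_univ_five]
  have hw : w ⬝ᵥ w = 1 := by simp [w, dotProduct, Fin.sum_univ_five, ← hn, sq]
  have hu : u ⬝ᵥ u = cbar ^ 2 := by
    rw [hcbar, Real.sq_sqrt (by positivity)]
    simp [u, dotProduct, Fin.sum_univ_five]
    ring
  have huU : u ⬝ᵥ U = Q := by simp [u, hU, hQ, dotProduct, Fin.sum_univ_five]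
  have hwU : w ⬝ᵥ U = Vn := by
    simp [w, hU, hVn, dotProduct, Fin.sum_univ_five]
    ring
  have habs_eq : absAn = cbar⁻¹ • (An * An) := by
    have hc : √(u ⬝ᵥ u) = cbar := by rw [hu, Real.sqrt_sq (hcbar ▸ Real.sqrt_nonneg _)]
    rw [← hc, hAuw]
    exact habs.1.eq_inv_sqrt_smul_mul_self (isHermitian_iff_isSymm.mpr
      (isSymm_vecMulVec_add_vecMulVec u w)) (hu ▸ sq_nonneg cbar)
      (vecMulVec_add_vecMulVec_mul_self_mul huw hw) (hAuw ▸ habs.2)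
  rw [habs_eq, smul_mulVec, dotProduct_smul, hAuw,
    dotProduct_vecMulVec_add_vecMulVec_mul_self_mulVec huw hw, hu, huU, hwU, smul_eq_mul,
    mul_add, one_div, sq cbar, ← mul_assoc, ← mul_assoc, inv_mul_mul_self]

/-- For the wall normal coefficient matrix `A_n` of the symmetrized linearized
Euler equations, the quadratic form of the matrix absolute value `|A_n|`
(the positive semidefinite square root of `A_n²`) satisfies
`Uᵀ|A_n|U = Q²/c̄ + c̄·V_n²` with `c̄ = √(a²+b²)`, `Q = bρ' + aP'`. -/
theorem abs_An_quadratic_form (a b : ℝ) (ha : 0 < a) (hb : 0 < b)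
    (n : Fin 3 → ℝ) (hn : n 0 ^ 2 + n 1 ^ 2 + n 2 ^ 2 = 1)
    (ρ' P' : ℝ) (V : Fin 3 → ℝ)
    (Vn : ℝ) (hVn : Vn = V 0 * n 0 + V 1 * n 1 + V 2 * n 2)
    (cbar : ℝ) (hcbar : cbar = Real.sqrt (a ^ 2 + b ^ 2))
    (Q : ℝ) (hQ : Q = b * ρ' + a * P')
    (An : Matrix (Fin 5) (Fin 5) ℝ)
    (hAn : An = !![0, n 0 * b, n 1 * b, n 2 * b, 0;
                   n 0 * b, 0, 0, 0, n 0 * a;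
                   n 1 * b, 0, 0, 0, n 1 * a;
                   n 2 * b, 0, 0, 0, n 2 * a;
                   0, n 0 * a, n 1 * a, n 2 * a, 0])
    (absAn : Matrix (Fin 5) (Fin 5) ℝ)
    (habs : absAn.PosSemidef ∧ absAn * absAn = An * An)
    (U : Fin 5 → ℝ) (hU : U = ![ρ', V 0, V 1, V 2, P']) :
    U ⬝ᵥ (absAn *ᵥ U) = (1 / cbar) * Q ^ 2 + cbar * Vn ^ 2 :=
  abs_An_quadratic_form_general a b n hn ρ' P' V Vn hVn cbar hcbar Q hQ An hAn absAn habs U hU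
end

section
/- Given the Euler entropy variables W = ((γ−ς)/(γ−1) − β||V||², 2βV, −2β) with β = ρ/(2P), ς = ln P − γ ln ρ, the entropy-stability boundary term for the wall flux F* = (0, P*·n, 0) simplifies to ρ·V_n·(P*/P − 1); i.e., Wᵀ(F* − F·n) + f^s·n = ρ·V_n·(P*/P − 1), where F·n = (ρV_n, ρV_n V + P n, (ρE+P)V_n) and f^s·n = −ρς V_n/(γ−1). -/
/-!
The boundary term splits as `W ⬝ᵥ F* − (W ⬝ᵥ (F·n) − f^s·n)`. Since `F*` only has momentum
components, `W ⬝ᵥ F* = 2β P* V_n = ρ V_n P*/P`. The bracket is the normal entropy potential flux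
`ψ·n = ρ V_n`: the `ς` terms cancel against `f^s·n`, and with `ρE = P/(γ−1) + ½ρ‖V‖²` so do the
kinetic-energy terms.
-/

open Matrix

theorem dotProduct_wallFlux (w n : Fin 3 → ℝ) (w₀ w₄ p : ℝ) :
    ![w₀, w 0, w 1, w 2, w₄] ⬝ᵥ ![0, p * n 0, p * n 1, p * n 2, 0] =
      p * (w 0 * n 0 + w 1 * n 1 + w 2 * n 2) := by
  simp only [dotProduct, Fin.sum_univ_five, cons_val_zero, cons_val_one, cons_val]
  ring

theorem totalEnergy_eq_of_idealGas {γ ρ P rhoE : ℝ} (V : Fin 3 → ℝ) (hγ : γ ≠ 1)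
    (hE : P = (γ - 1) * (rhoE - (1 / 2) * ρ * (V 0 ^ 2 + V 1 ^ 2 + V 2 ^ 2))) :
    rhoE = P / (γ - 1) + 1 / 2 * ρ * (V 0 ^ 2 + V 1 ^ 2 + V 2 ^ 2) := by
  rw [hE, mul_div_cancel_left₀ _ (sub_ne_zero.mpr hγ)]
  ring

theorem entropyVars_dotProduct_normalFlux_add_entropyFlux {γ ρ P rhoE ς β Vn : ℝ} (n V : Fin 3 → ℝ)
    (hγ : γ ≠ 1) (hP : P ≠ 0)
    (hVn : Vn = V 0 * n 0 + V 1 * n 1 + V 2 * n 2)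
    (hE : P = (γ - 1) * (rhoE - (1 / 2) * ρ * (V 0 ^ 2 + V 1 ^ 2 + V 2 ^ 2)))
    (hβ : β = ρ / (2 * P)) :
    ![(γ - ς) / (γ - 1) - β * (V 0 ^ 2 + V 1 ^ 2 + V 2 ^ 2),
        2 * β * V 0, 2 * β * V 1, 2 * β * V 2, -2 * β] ⬝ᵥ
      ![ρ * Vn, ρ * Vn * V 0 + P * n 0, ρ * Vn * V 1 + P * n 1,
        ρ * Vn * V 2 + P * n 2, (rhoE + P) * Vn] + ρ * ς * Vn / (γ - 1) = ρ * Vn := by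
  rw [totalEnergy_eq_of_idealGas V hγ hE]
  have hγ' : γ - 1 ≠ 0 := sub_ne_zero.mpr hγ
  simp only [dotProduct, Fin.sum_univ_five, cons_val_zero, cons_val_one, cons_val]
  subst hβ hVn
  field_simp
  ring

theorem wall_entropy_boundary_term_general (γ ρ P Pstar : ℝ) (hγ : 1 < γ)
    (hP : 0 < P)
    (n : Fin 3 → ℝ)
    (V : Fin 3 → ℝ)
    (Vn : ℝ) (hVn : Vn = V 0 * n 0 + V 1 * n 1 + V 2 * n 2)
    (rhoE : ℝ)
    (hE : P = (γ - 1) * (rhoE - (1 / 2) * ρ * (V 0 ^ 2 + V 1 ^ 2 + V 2 ^ 2)))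
    (ς : ℝ)
    (β : ℝ) (hβ : β = ρ / (2 * P))
    (W : Fin 5 → ℝ)
    (hW : W = ![(γ - ς) / (γ - 1) - β * (V 0 ^ 2 + V 1 ^ 2 + V 2 ^ 2),
                2 * β * V 0, 2 * β * V 1, 2 * β * V 2, -2 * β])
    (Fstar Fn : Fin 5 → ℝ)
    (hFstar : Fstar = ![0, Pstar * n 0, Pstar * n 1, Pstar * n 2, 0])
    (hFn : Fn = ![ρ * Vn, ρ * Vn * V 0 + P * n 0, ρ * Vn * V 1 + P * n 1,
                  ρ * Vn * V 2 + P * n 2, (rhoE + P) * Vn])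
    (fs : ℝ) (hfs : fs = -(ρ * ς * Vn) / (γ - 1)) :
    W ⬝ᵥ (Fstar - Fn) + fs = ρ * Vn * (Pstar / P - 1) := by
  have hψ := entropyVars_dotProduct_normalFlux_add_entropyFlux (ς := ς) n V hγ.ne' hP.ne' hVn hE hβ
  have hwall := dotProduct_wallFlux (fun i => 2 * β * V i) n
    ((γ - ς) / (γ - 1) - β * (V 0 ^ 2 + V 1 ^ 2 + V 2 ^ 2)) (-2 * β) Pstar
  subst hW hFstar hFn hfs
  rw [dotProduct_sub, hwall, neg_div, ← sub_eq_add_neg, sub_sub, hψ]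
  subst hβ hVn
  field_simp

/-- The entropy-stability boundary term for the Euler slip-wall flux
`F* = (0, P*·n, 0)` simplifies to `ρ·V_n·(P*/P − 1)`:
`Wᵀ(F* − F·n) + f^s·n = ρ·V_n·(P*/P − 1)`. -/
theorem wall_entropy_boundary_term (γ ρ P Pstar : ℝ) (hγ : 1 < γ)
    (hρ : 0 < ρ) (hP : 0 < P)
    (n : Fin 3 → ℝ) (hn : n 0 ^ 2 + n 1 ^ 2 + n 2 ^ 2 = 1)
    (V : Fin 3 → ℝ)
    (Vn : ℝ) (hVn : Vn = V 0 * n 0 + V 1 * n 1 + V 2 * n 2)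
    (rhoE : ℝ)
    (hE : P = (γ - 1) * (rhoE - (1 / 2) * ρ * (V 0 ^ 2 + V 1 ^ 2 + V 2 ^ 2)))
    (ς : ℝ) (hς : ς = Real.log P - γ * Real.log ρ)
    (β : ℝ) (hβ : β = ρ / (2 * P))
    (W : Fin 5 → ℝ)
    (hW : W = ![(γ - ς) / (γ - 1) - β * (V 0 ^ 2 + V 1 ^ 2 + V 2 ^ 2),
                2 * β * V 0, 2 * β * V 1, 2 * β * V 2, -2 * β])
    (Fstar Fn : Fin 5 → ℝ)
    (hFstar : Fstar = ![0, Pstar * n 0, Pstar * n 1, Pstar * n 2, 0])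
    (hFn : Fn = ![ρ * Vn, ρ * Vn * V 0 + P * n 0, ρ * Vn * V 1 + P * n 1,
                  ρ * Vn * V 2 + P * n 2, (rhoE + P) * Vn])
    (fs : ℝ) (hfs : fs = -(ρ * ς * Vn) / (γ - 1)) :
    W ⬝ᵥ (Fstar - Fn) + fs = ρ * Vn * (Pstar / P - 1) :=
  wall_entropy_boundary_term_general γ ρ P Pstar hγ hP n V Vn hVn rhoE hE ς β hβ W hW Fstar Fn
    hFstar hFn fs hfs
end

section
/- All the entropy-stable wall pressure ratios agree to first order in the normal Mach number: r_LF, r_HLL, r_EC-LF, r_Roe, and the exact Riemann problem ratio r_RP all satisfy r(Ma) = 1 + γ·Ma + O(Ma²) as Ma → 0; equivalently, each has derivative γ at Ma = 0 (one-sided derivatives where the formula is piecewise). -/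
/-!
Each ratio except the left branch of `r_RP` has the form `1 + γ Ma g(Ma)` with `g` continuous
and `g 0 = 1`, and the slope of `Ma ↦ Ma g(Ma)` at `0` is `g(Ma)` itself, which tends to `1`.
The left branch of `r_RP` is `(1 + b Ma) ^ p` with `b p = γ`, so the chain rule gives `γ`.
-/

theorem hasDerivAt_sub_mul_of_continuousAt {𝕜 : Type*} [NontriviallyNormedField 𝕜]
    {g : 𝕜 → 𝕜} {a : 𝕜} (hg : ContinuousAt g a) :
    HasDerivAt (fun x => (x - a) * g x) (g a) a := by
  rw [hasDerivAt_iff_tendsto_slope]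
  refine (hg.tendsto.mono_left nhdsWithin_le_nhds).congr' ?_
  filter_upwards [self_mem_nhdsWithin] with x hx
  have hxa : x - a ≠ 0 := sub_ne_zero.mpr hx
  rw [slope_def_field]
  field_simp
  simp

theorem hasDerivAt_one_add_mul_mul_zero {g : ℝ → ℝ} (γ : ℝ) (hg : ContinuousAt g 0)
    (hg0 : g 0 = 1) : HasDerivAt (fun x => 1 + γ * x * g x) γ 0 := by
  have h := ((hasDerivAt_sub_mul_of_continuousAt hg).const_mul γ).const_add 1
  simpa only [sub_zero, hg0, mul_one, mul_assoc] using h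

theorem hasDerivAt_one_add_mul_rpow_zero (b p : ℝ) :
    HasDerivAt (fun x => (1 + b * x) ^ p) (b * p) 0 := by
  have h := (((hasDerivAt_id (0 : ℝ)).const_mul b).const_add 1).rpow_const (p := p)
    (Or.inl (by simp))
  simpa using h

/-- All the wall pressure ratios agree to first order in the normal Mach number:
`r_LF`, `r_HLL`, `r_EC-LF`, `r_Roe` and the exact Riemann problem ratio `r_RP`
all have derivative `γ` at `Ma = 0` (one-sided derivatives for the piecewise
defined `r_RP`), i.e. `r(Ma) = 1 + γ·Ma + O(Ma²)` as `Ma → 0`. -/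
theorem wall_pressure_ratios_first_order (γ : ℝ) (hγ : 1 < γ)
    (rLF rHLL rECLF rRoe rRP : ℝ → ℝ)
    (hLF : rLF = fun Ma => 1 + γ * Ma * (Ma + |Ma| + 1))
    (hHLL : rHLL = fun Ma => 1 + γ * Ma)
    (hECLF : rECLF = fun Ma => 1 + γ * Ma * (|Ma| + 1))
    (hRoe : rRoe = fun Ma => 1 + γ * Ma * (Ma + Real.sqrt (1 + ((γ - 1) / 2) * Ma ^ 2)))
    (hRP : rRP = fun Ma => if 0 < Ma then
        1 + γ * Ma * (((γ + 1) / 4) * Ma + Real.sqrt ((((γ + 1) / 4) * Ma) ^ 2 + 1))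
      else (1 + ((γ - 1) / 2) * Ma) ^ (2 * γ / (γ - 1))) :
    HasDerivAt rLF γ 0 ∧ HasDerivAt rHLL γ 0 ∧ HasDerivAt rECLF γ 0 ∧
    HasDerivAt rRoe γ 0 ∧
    HasDerivWithinAt rRP γ (Set.Ici 0) 0 ∧ HasDerivWithinAt rRP γ (Set.Iic 0) 0 := by
  subst hLF hHLL hECLF hRoe hRP
  have hRPright := hasDerivAt_one_add_mul_mul_zero γ
    (g := fun Ma => ((γ + 1) / 4) * Ma + Real.sqrt ((((γ + 1) / 4) * Ma) ^ 2 + 1))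
    (by fun_prop) (by simp)
  have hRPleft : HasDerivAt (fun Ma => (1 + ((γ - 1) / 2) * Ma) ^ (2 * γ / (γ - 1))) γ 0 := by
    convert hasDerivAt_one_add_mul_rpow_zero ((γ - 1) / 2) (2 * γ / (γ - 1)) using 1
    field_simp [(sub_pos.mpr hγ).ne']
  refine ⟨hasDerivAt_one_add_mul_mul_zero γ (by fun_prop) (by simp),
    by simpa using ((hasDerivAt_id (0 : ℝ)).const_mul γ).const_add 1,
    hasDerivAt_one_add_mul_mul_zero γ (by fun_prop) (by simp),
    hasDerivAt_one_add_mul_mul_zero γ (by fun_prop) (by simp),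
    hRPright.hasDerivWithinAt.congr (fun x hx => ?_) (by simp),
    hRPleft.hasDerivWithinAt.congr (fun x hx => if_neg (not_lt.mpr hx)) (by simp)⟩
  rcases (Set.mem_Ici.mp hx).lt_or_eq with hx0 | rfl
  · exact if_pos hx0
  · simp
end
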